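/- Let f₁, f₂ : ℝ → ℍ be one-sided originals with growth exponent s₀ (and some constants C₁, C₂), and suppose their Laplace images coincide on the half-space: ∫_0^∞ f₁(t)·exp(−t·p) dt = ∫_0^∞ f₂(t)·exp(−t·p) dt for every quaternion p with re p > s₀. Then f₁(t) = f₂(t) at every point t ∈ ℝ at which both f₁ and f₂ are continuous. (Paper's Theorem 3.7: an original is completely defined by its image up to values at points of discontinuity.) -/

import Mathlib

/-!
It suffices to show that an original `g` whose Laplace image vanishes is zero at its points of
continuity. On the slice `p = σ + 2πω i` of the half-space, `exp (-(x • p))` lies in the copy of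
`ℂ` inside `ℍ`, and writing `g = z₁ + z₂ j` turns right multiplication by `ℂ` into complex scalar
multiplication of the pair `(z₁, conj z₂)`. So the vanishing of the Laplace image on that line says
that the Fourier transform of the `ℂ²`-valued integrable function `x ↦ e^{-σx} (z₁ x, conj z₂ x)`
vanishes, and Fourier inversion at a point of continuity gives `g = 0` there.
-/

open MeasureTheory Set Filter

/-- `f : ℝ → ℍ` is a one-sided original with growth exponent `s₀` and
constant `C > 0`. -/
structure IsOneSidedOriginal (f : ℝ → Quaternion ℝ) (s₀ C : ℝ) : Prop where
  posC : 0 < C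
  measurable : MeasureTheory.StronglyMeasurable f
  locInt : ∀ r : ℝ, 0 < r → IntegrableOn f (Icc (-r) r)
  zero_of_neg : ∀ t : ℝ, t < 0 → f t = 0
  growth : ∀ t : ℝ, 0 ≤ t → ‖f t‖ ≤ C * Real.exp (s₀ * t)

open scoped FourierTransform Quaternion

namespace Quaternion

/-- Writing `q = z₁ + z₂ j` with `z₁ z₂ : ℂ`, this is `q ↦ (z₁, conj z₂)`. -/
noncomputable def toComplexPair : ℍ →L[ℝ] ℂ × ℂ :=
  LinearMap.toContinuousLinearMap
    { toFun := fun q => (⟨q.re, q.imI⟩, ⟨q.imJ, -q.imK⟩)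
      map_add' := fun a b => by
        refine Prod.ext ?_ ?_ <;> apply Complex.ext <;> simp [add_comm]
      map_smul' := fun c a => by
        refine Prod.ext ?_ ?_ <;> apply Complex.ext <;> simp }

lemma toComplexPair_apply (q : ℍ) :
    toComplexPair q = (⟨q.re, q.imI⟩, ⟨q.imJ, -q.imK⟩) :=
  rfl

lemma toComplexPair_eq_zero {q : ℍ} : toComplexPair q = 0 ↔ q = 0 := by
  simp [toComplexPair_apply, Prod.ext_iff, Complex.ext_iff, Quaternion.ext_iff, and_assoc]

lemma toComplexPair_mul_coeComplex (q : ℍ) (z : ℂ) :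
    toComplexPair (q * z) = z • toComplexPair q := by
  refine Prod.ext ?_ ?_ <;> apply Complex.ext <;>
    simp [toComplexPair_apply, re_mul, imI_mul, imJ_mul, imK_mul] <;> ring

lemma exp_neg_smul_coeComplex (x : ℝ) (z : ℂ) :
    NormedSpace.exp (-(x • (z : ℍ))) = (Complex.exp (-(x • z)) : ℍ) := by
  rw [Complex.exp_eq_exp_ℂ, ← coe_ofComplex,
    NormedSpace.map_exp ofComplex ofComplex.toLinearMap.continuous_of_finiteDimensional,
    map_neg, map_smul]

lemma continuous_exp : Continuous (NormedSpace.exp : ℍ → ℍ) :=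
  continuous_iff_continuousAt.2 fun q => (NormedSpace.exp_analytic (𝕂 := ℝ) q).continuousAt

lemma norm_exp_neg_smul (x : ℝ) (p : ℍ) :
    ‖NormedSpace.exp (-(x • p))‖ = Real.exp (-(x * p.re)) := by
  rw [norm_exp, ← Real.exp_eq_exp_ℝ]
  simp

end Quaternion

theorem MeasureTheory.Integrable.eq_zero_of_fourier_eq_zero {V E : Type*}
    [NormedAddCommGroup V] [InnerProductSpace ℝ V] [FiniteDimensional ℝ V] [MeasurableSpace V]
    [BorelSpace V] [NormedAddCommGroup E] [NormedSpace ℂ E] [CompleteSpace E] {f : V → E}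
    (hf : Integrable f) (hF : 𝓕 f = 0) {v : V} (hv : ContinuousAt f v) : f v = 0 := by
  rw [← hf.fourierInv_fourier_eq (hF ▸ integrable_zero V E volume) hv, hF]
  simp [Real.fourierInv_eq]

namespace Quaternion

theorem eq_zero_of_integral_mul_exp_neg_smul_eq_zero {f : ℝ → ℍ} {σ t : ℝ}
    (hint : ∀ z : ℂ, z.re = σ → Integrable fun x => f x * NormedSpace.exp (-(x • (z : ℍ))))
    (hzero : ∀ z : ℂ, z.re = σ → ∫ x, f x * NormedSpace.exp (-(x • (z : ℍ))) = 0)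
    (hc : ContinuousAt f t) : f t = 0 := by
  set u : ℝ → ℂ × ℂ := fun x => Complex.exp (-(x • (σ : ℂ))) • toComplexPair (f x)
  have hu : ∀ (z : ℂ) x, toComplexPair (f x * NormedSpace.exp (-(x • (z : ℍ)))) =
      Complex.exp (-(x • z)) • toComplexPair (f x) := fun z x => by
    rw [exp_neg_smul_coeComplex, toComplexPair_mul_coeComplex]
  have hu_int : Integrable u :=
    (toComplexPair.integrable_comp (hint σ rfl)).congr (.of_forall fun x => hu σ x)
  have hFu : 𝓕 u = 0 := by
    ext1 ω
    set z : ℂ := σ + 2 * Real.pi * ω * Complex.I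
    have hz : z.re = σ := by simp [z]
    calc 𝓕 u ω
        = ∫ x, toComplexPair (f x * NormedSpace.exp (-(x • (z : ℍ)))) := by
          rw [Real.fourier_real_eq_integral_exp_smul]
          refine integral_congr_ae (.of_forall fun x => ?_)
          simp only [u, hu, smul_smul, ← Complex.exp_add]
          congr 2
          simp only [z, Complex.real_smul]
          push_cast
          ring
      _ = 0 := by rw [toComplexPair.integral_comp_comm (hint z hz), hzero z hz, map_zero]
  have hu_cont : ContinuousAt u t := by fun_prop
  simpa [u, Complex.exp_ne_zero, toComplexPair_eq_zero] using
    hu_int.eq_zero_of_fourier_eq_zero hFu hu_cont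

end Quaternion

namespace IsOneSidedOriginal

variable {f g : ℝ → ℍ} {s₀ C D : ℝ}

theorem sub (hf : IsOneSidedOriginal f s₀ C) (hg : IsOneSidedOriginal g s₀ D) :
    IsOneSidedOriginal (f - g) s₀ (C + D) where
  posC := add_pos hf.posC hg.posC
  measurable := hf.measurable.sub hg.measurable
  locInt r hr := (hf.locInt r hr).sub (hg.locInt r hr)
  zero_of_neg t ht := by simp [hf.zero_of_neg t ht, hg.zero_of_neg t ht]
  growth t ht :=
    calc ‖f t - g t‖ ≤ ‖f t‖ + ‖g t‖ := norm_sub_le _ _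
      _ ≤ C * Real.exp (s₀ * t) + D * Real.exp (s₀ * t) :=
          add_le_add (hf.growth t ht) (hg.growth t ht)
      _ = (C + D) * Real.exp (s₀ * t) := by ring

theorem integrable_mul_exp_neg_smul (hf : IsOneSidedOriginal f s₀ C) {p : ℍ} (hp : s₀ < p.re) :
    Integrable fun x => f x * NormedSpace.exp (-(x • p)) := by
  have hsupp : Function.support (fun x => f x * NormedSpace.exp (-(x • p))) ⊆ Ici 0 :=
    fun x hx => mem_Ici.2 <| not_lt.1 fun hx0 => hx (by simp [hf.zero_of_neg x hx0])
  rw [← integrableOn_iff_integrable_of_support_subset hsupp]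
  have hbound : IntegrableOn (fun x => C * Real.exp (-(p.re - s₀) * x)) (Ici 0) :=
    ((integrableOn_Ici_iff_integrableOn_Ioi).2
      (exp_neg_integrableOn_Ioi 0 (sub_pos.2 hp))).const_mul C
  refine hbound.mono' ?_ ?_
  · exact (hf.measurable.aestronglyMeasurable.mul
      (Quaternion.continuous_exp.comp (by fun_prop)).aestronglyMeasurable).restrict
  · filter_upwards [ae_restrict_mem measurableSet_Ici] with x hx
    calc ‖f x * NormedSpace.exp (-(x • p))‖ = ‖f x‖ * Real.exp (-(x * p.re)) := by
          rw [norm_mul, Quaternion.norm_exp_neg_smul]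
      _ ≤ C * Real.exp (s₀ * x) * Real.exp (-(x * p.re)) := by gcongr; exact hf.growth x hx
      _ = C * Real.exp (-(p.re - s₀) * x) := by rw [mul_assoc, ← Real.exp_add]; ring_nf

theorem eq_zero_of_laplace_eq_zero (hf : IsOneSidedOriginal f s₀ C)
    (h : ∀ p : ℍ, s₀ < p.re → ∫ x in Ici 0, f x * NormedSpace.exp (-(x • p)) = 0) {t : ℝ}
    (hc : ContinuousAt f t) : f t = 0 := by
  have hre : ∀ z : ℂ, z.re = s₀ + 1 → s₀ < (z : ℍ).re := fun z hz => by simp [hz]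
  refine Quaternion.eq_zero_of_integral_mul_exp_neg_smul_eq_zero
    (fun z hz => hf.integrable_mul_exp_neg_smul (hre z hz)) (fun z hz => ?_) hc
  rw [← h _ (hre z hz), setIntegral_eq_integral_of_forall_compl_eq_zero]
  intro x hx
  simp [hf.zero_of_neg x (not_le.1 hx)]

end IsOneSidedOriginal

theorem laplace_image_determines_original
    (f₁ f₂ : ℝ → Quaternion ℝ) (s₀ C₁ C₂ : ℝ)
    (hf₁ : IsOneSidedOriginal f₁ s₀ C₁) (hf₂ : IsOneSidedOriginal f₂ s₀ C₂)
    (heq : ∀ p : Quaternion ℝ, s₀ < p.re →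
      (∫ t in Ici (0 : ℝ), f₁ t * NormedSpace.exp (-(t • p))) =
      ∫ t in Ici (0 : ℝ), f₂ t * NormedSpace.exp (-(t • p)))
    (t : ℝ) (hc₁ : ContinuousAt f₁ t) (hc₂ : ContinuousAt f₂ t) :
    f₁ t = f₂ t := by
  refine sub_eq_zero.1 <|
    (hf₁.sub hf₂).eq_zero_of_laplace_eq_zero (fun p hp => ?_) (hc₁.sub hc₂)
  simp only [Pi.sub_apply, sub_mul]
  rw [integral_sub (hf₁.integrable_mul_exp_neg_smul hp).integrableOn
    (hf₂.integrable_mul_exp_neg_smul hp).integrableOn, heq p hp, sub_self]
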